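/- Under Assumption 1, suppose I_σ^c = I_σ for all σ ∈ Σ (non-overlapping modeled state sets), and let C' be a safety controller for the composed abstraction S_c and safe set X_c^0. Then for every σ ∈ Σ, the projected controller C'_σ : X_σ → 2^{U_σ} defined by C'_σ(Out_σ) = ∅ and C'_σ(s_σ) = {u_σ ∈ π_{J_σ}(C'(s)) | s ∈ X_c^0, s_{I_σ} = s_σ} for s_σ ∈ X_σ^0 is a safety controller for the subsystem S_σ and safe set X_σ^0. -/

import Mathlib

open Set Function

/-- `ℝⁿ` modeled as `Fin n → ℝ`. -/
abbrev Vec (n : ℕ) : Type := Fin n → ℝ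

/-- Projection `π_{I'}` of a dependent tuple onto the components with indices in `I'`. -/
def proj {ι : Type*} (E : ι → Type*) (I' : Set ι) (x : (i : ι) → E i) : (i : I') → E i.1 :=
  fun i => x i.1

/-- `P` is a finite partition of `A`: finitely many nonempty pairwise disjoint cells covering `A`. -/
def IsFinPartition {α : Type*} (P : Set (Set α)) (A : Set α) : Prop :=
  P.Finite ∧ (∀ s ∈ P, s.Nonempty) ∧ ⋃₀ P = A ∧
    ∀ s ∈ P, ∀ t ∈ P, s ≠ t → Disjoint s t

/-- The family `A : τ → Set α` is a partition of the index type `α`. -/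
def IsIndexPartition {τ α : Type*} (A : τ → Set α) : Prop :=
  (⋃ σ, A σ) = Set.univ ∧ Pairwise (Disjoint on A)

/-- The set `𝒫` of cells `s₁ × ⋯ × s_n̄`, `s_i ∈ 𝒫_i`, of the product partition. -/
def cells {ι : Type*} {E : ι → Type*} (P : (i : ι) → Set (Set (E i))) :
    Set (Set ((i : ι) → E i)) :=
  { s | ∃ f : (i : ι) → Set (E i), (∀ i, f i ∈ P i) ∧ s = Set.pi Set.univ f }

/-- The set `X_σ⁰` of cells `∏_{i ∈ I'} s_i`, `s_i ∈ 𝒫_i`, of the partition restricted to `I'`. -/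
def cellsOn {ι : Type*} {E : ι → Type*} (P : (i : ι) → Set (Set (E i))) (I' : Set ι) :
    Set (Set ((i : I') → E i.1)) :=
  { s | ∃ f : (i : ι) → Set (E i), (∀ i, f i ∈ P i) ∧
        s = Set.pi Set.univ (fun i : I' => f i.1) }

/-- `F(𝒳',𝒰') = ⋃_{x ∈ 𝒳', u ∈ 𝒰'} F(x,u)`. -/
def Fset {X U : Type*} (F : X → U → Set X) (A : Set X) (B : Set U) : Set X :=
  ⋃ x ∈ A, ⋃ u ∈ B, F x u

/-- `Φ_σ(s_σ,u_σ) = F̄(𝒳 ∩ π_{I_σ}⁻¹(s_σ), 𝒰 ∩ π_{J_σ}⁻¹({u_σ}))`. -/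
def Phi {ι κ : Type*} (E : ι → Type*) (Fu : κ → Type*)
    (Fbar : Set ((i : ι) → E i) → Set ((j : κ) → Fu j) → Set ((i : ι) → E i))
    (Xset : Set ((i : ι) → E i)) (Uset : Set ((j : κ) → Fu j))
    (Iσ : Set ι) (Jσ : Set κ)
    (sσ : Set ((i : Iσ) → E i.1)) (uσ : (j : Jσ) → Fu j.1) : Set ((i : ι) → E i) :=
  Fbar (Xset ∩ proj E Iσ ⁻¹' sσ) (Uset ∩ proj Fu Jσ ⁻¹' {uσ})

/-- `Out_σ = π_{I_σ}(ℝⁿ) \ 𝒳_{I_σ}`. -/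
def OutOf {ι : Type*} (E : ι → Type*) (Iσ : Set ι) (Xset : Set ((i : ι) → E i)) :
    Set ((i : Iσ) → E i.1) :=
  proj E Iσ '' Set.univ \ proj E Iσ '' Xset

/-- Transition map `δ_σ` of the symbolic subsystem `S_σ`. -/
def deltaSub {ι κ : Type*} (E : ι → Type*) (Fu : κ → Type*)
    (Fbar : Set ((i : ι) → E i) → Set ((j : κ) → Fu j) → Set ((i : ι) → E i))
    (Xset : Set ((i : ι) → E i)) (Uset : Set ((j : κ) → Fu j))
    (P : (i : ι) → Set (Set (E i))) (V : (j : κ) → Set (Fu j))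
    (Iσ Icσ : Set ι) (Jσ : Set κ)
    (sσ : Set ((i : Iσ) → E i.1)) (uσ : (j : Jσ) → Fu j.1) :
    Set (Set ((i : Iσ) → E i.1)) :=
  { s' | sσ ∈ cellsOn P Iσ ∧ uσ ∈ Set.pi Set.univ (fun j : Jσ => V j.1) ∧
      ((s' ∈ cellsOn P Iσ ∧
          (s' ∩ proj E Iσ '' Phi E Fu Fbar Xset Uset Iσ Jσ sσ uσ).Nonempty) ∨
        (s' = OutOf E Iσ Xset ∧
          (proj E Iσ '' Phi E Fu Fbar Xset Uset Iσ Jσ sσ uσ ∩ proj E Iσ '' Xset = ∅ ∨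
            ¬proj E Icσ '' Phi E Fu Fbar Xset Uset Iσ Jσ sσ uσ ⊆ proj E Icσ '' Xset))) }

/-- Transition map `δ_c` of the composed abstraction `S_c`. -/
def deltaC {ι κ τ : Type*} (E : ι → Type*) (Fu : κ → Type*)
    (Fbar : Set ((i : ι) → E i) → Set ((j : κ) → Fu j) → Set ((i : ι) → E i))
    (Xset : Set ((i : ι) → E i)) (Uset : Set ((j : κ) → Fu j))
    (P : (i : ι) → Set (Set (E i))) (V : (j : κ) → Set (Fu j))
    (Im Ic : τ → Set ι) (Jm : τ → Set κ)
    (s : Set ((i : ι) → E i)) (u : (j : κ) → Fu j) :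
    Set (Set ((i : ι) → E i)) :=
  { s' | s ∈ cells P ∧ u ∈ Set.pi Set.univ V ∧
      ((s' ∈ cells P ∧ ∀ σ : τ,
          proj E (Im σ) '' s' ∈
            deltaSub E Fu Fbar Xset Uset P V (Im σ) (Ic σ) (Jm σ)
              (proj E (Im σ) '' s) (proj Fu (Jm σ) u)) ∨
        (s' = Xsetᶜ ∧ ∃ σ : τ,
          OutOf E (Im σ) Xset ∈
            deltaSub E Fu Fbar Xset Uset P V (Im σ) (Ic σ) (Jm σ)
              (proj E (Im σ) '' s) (proj Fu (Jm σ) u))) }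

/-- Safety controller for the transition map `δ` and the safe set `safe`. -/
def IsSafetyController {X U : Type*} (δ : X → U → Set X) (safe : Set X) (C : X → Set U) : Prop :=
  (∀ x, ∀ u ∈ C x, (δ x u).Nonempty) ∧
  (∀ x, (C x).Nonempty → x ∈ safe) ∧
  (∀ x, ∀ u ∈ C x, ∀ x', x' ∈ δ x u → (C x').Nonempty)

/-- Maximal safety controller. -/
def IsMaximalSafetyController {X U : Type*} (δ : X → U → Set X) (safe : Set X)
    (Cstar : X → Set U) : Prop :=
  IsSafetyController δ safe Cstar ∧
    ∀ C, IsSafetyController δ safe C → ∀ x, C x ⊆ Cstar x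

/-- Feedback refinement relation (over a common input type). -/
def IsFeedbackRefinement {Xa Xb U : Type*} (δa : Xa → U → Set Xa) (δb : Xb → U → Set Xb)
    (H : Xa → Xb) : Prop :=
  ∀ xa : Xa,
    (∀ u, (δb (H xa) u).Nonempty → (δa xa u).Nonempty) ∧
    (∀ u, (δb (H xa) u).Nonempty → H '' δa xa u ⊆ δb (H xa) u)

/-- Concrete transition map of `S = (ℝⁿ, 𝒰, F)` (inputs restricted to `𝒰`). -/
def deltaConc {X U : Type*} (F : X → U → Set X) (Uset : Set U) (x : X) (u : U) : Set X :=
  { x' | u ∈ Uset ∧ x' ∈ F x u }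

/-!
Because the modeled index sets `Im σ` are pairwise disjoint, a cell successor `t` of the
subsystem `σ` under `(π s, π u)` can be glued with a cell successor `s₀` of `(s, u)` in the
composed abstraction (one exists since `C'` is enabled at `s`, and it is not `Out` since `C'` is
safe) into a cell `s'` whose `σ`-component is `t` and whose other components are those of `s₀`.
Then `s'` is a `δ_c`-successor of `(s, u)`, so `C' s'` is nonempty, and projecting one of its
inputs gives an input for `t`. An `Out_σ`-successor would make `Out` a `δ_c`-successor of
`(s, u)`, which the safety of `C'` rules out.
-/

lemma IsFinPartition.nonempty_of_mem {α : Type*} {P : Set (Set α)} {A : Set α}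
    (hP : IsFinPartition P A) {s : Set α} (hs : s ∈ P) : s.Nonempty :=
  hP.2.1 s hs

lemma IsFinPartition.subset_of_mem {α : Type*} {P : Set (Set α)} {A : Set α}
    (hP : IsFinPartition P A) {s : Set α} (hs : s ∈ P) : s ⊆ A :=
  hP.2.2.1 ▸ subset_sUnion_of_mem hs

lemma IsSafetyController.mem_safe_of_mem_delta {X U : Type*} {δ : X → U → Set X}
    {safe : Set X} {C : X → Set U} (hC : IsSafetyController δ safe C) {x x' : X} {u : U}
    (hu : u ∈ C x) (hx' : x' ∈ δ x u) : x' ∈ safe :=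
  hC.2.1 x' (hC.2.2 x u hu x' hx')

section Cells

variable {ι : Type*} {E : ι → Type*} {P : (i : ι) → Set (Set (E i))}

lemma proj_image_univ_pi (I' : Set ι) {f : (i : ι) → Set (E i)} (hf : ∀ i, (f i).Nonempty) :
    proj E I' '' pi univ f = pi univ (fun i : I' => f i.1) := by
  classical
  ext y
  constructor
  · rintro ⟨x, hx, rfl⟩ i _
    exact hx i.1 trivial
  · intro hy
    choose g hg using hf
    refine ⟨fun i => if h : i ∈ I' then y ⟨i, h⟩ else g i, fun i _ => ?_, ?_⟩
    · by_cases h : i ∈ I'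
      · simpa [h] using hy ⟨i, h⟩ trivial
      · simpa [h] using hg i
    · funext i
      simp [proj, i.2]

lemma nonempty_of_mem_cells (hne : ∀ i, ∀ t ∈ P i, t.Nonempty) {s : Set ((i : ι) → E i)}
    (hs : s ∈ cells P) : s.Nonempty := by
  obtain ⟨f, hf, rfl⟩ := hs
  exact univ_pi_nonempty_iff.2 fun i => hne i _ (hf i)

lemma subset_univ_pi_of_mem_cells {X : (i : ι) → Set (E i)}
    (hP : ∀ i, IsFinPartition (P i) (X i)) {s : Set ((i : ι) → E i)} (hs : s ∈ cells P) :
    s ⊆ pi univ X := by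
  obtain ⟨f, hf, rfl⟩ := hs
  exact pi_mono fun i _ => (hP i).subset_of_mem (hf i)

lemma compl_univ_pi_notMem_cells {X : (i : ι) → Set (E i)}
    (hP : ∀ i, IsFinPartition (P i) (X i)) : (pi univ X)ᶜ ∉ cells P := fun h => by
  obtain ⟨x, hx⟩ := nonempty_of_mem_cells (fun i _ ht => (hP i).nonempty_of_mem ht) h
  exact hx (subset_univ_pi_of_mem_cells hP h hx)

lemma exists_mem_cells_proj_image_eq (hne : ∀ i, ∀ t ∈ P i, t.Nonempty) {I' : Set ι}
    {s : Set ((i : ι) → E i)} (hs : s ∈ cells P) {t : Set ((i : I') → E i.1)}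
    (ht : t ∈ cellsOn P I') :
    ∃ s' ∈ cells P, proj E I' '' s' = t ∧
      ∀ I'' : Set ι, Disjoint I'' I' → proj E I'' '' s' = proj E I'' '' s := by
  classical
  obtain ⟨f, hf, rfl⟩ := hs
  obtain ⟨g, hg, rfl⟩ := ht
  have hgf : ∀ i, I'.piecewise g f i ∈ P i := fun i => by
    by_cases hi : i ∈ I'
    · simpa [piecewise_eq_of_mem _ _ _ hi] using hg i
    · simpa [piecewise_eq_of_notMem _ _ _ hi] using hf i
  refine ⟨pi univ (I'.piecewise g f), ⟨_, hgf, rfl⟩, ?_, fun I'' hI'' => ?_⟩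
  · rw [proj_image_univ_pi _ fun i => hne i _ (hgf i)]
    exact congrArg _ (funext fun i => piecewise_eq_of_mem _ _ _ i.2)
  · rw [proj_image_univ_pi _ fun i => hne i _ (hgf i),
      proj_image_univ_pi _ fun i => hne i _ (hf i)]
    exact congrArg _ (funext fun i => piecewise_eq_of_notMem _ _ _ (disjoint_left.1 hI'' i.2))

end Cells

section Abstraction

variable {ι κ τ : Type*} {E : ι → Type*} {Fu : κ → Type*}
  {Fbar : Set ((i : ι) → E i) → Set ((j : κ) → Fu j) → Set ((i : ι) → E i)}
  {Xset : Set ((i : ι) → E i)} {Uset : Set ((j : κ) → Fu j)}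
  {P : (i : ι) → Set (Set (E i))} {V : (j : κ) → Set (Fu j)}
  {Im Ic : τ → Set ι} {Jm : τ → Set κ}

/-- The projected controller `C'_σ`; it is empty off the cells, in particular at `Out_σ`. -/
def projController (P : (i : ι) → Set (Set (E i)))
    (C' : Set ((i : ι) → E i) → Set ((j : κ) → Fu j))
    (I' : Set ι) (J' : Set κ) (sσ : Set ((i : I') → E i.1)) : Set ((j : J') → Fu j.1) :=
  {uσ | sσ ∈ cellsOn P I' ∧
    ∃ s ∈ cells P, proj E I' '' s = sσ ∧ ∃ u ∈ C' s, proj Fu J' u = uσ}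

lemma proj_image_mem_deltaSub_of_mem_deltaC (hout : Xsetᶜ ∉ cells P)
    {s s' : Set ((i : ι) → E i)} {u : (j : κ) → Fu j}
    (h : s' ∈ deltaC E Fu Fbar Xset Uset P V Im Ic Jm s u) (hs' : s' ∈ cells P) (σ : τ) :
    proj E (Im σ) '' s' ∈
      deltaSub E Fu Fbar Xset Uset P V (Im σ) (Ic σ) (Jm σ)
        (proj E (Im σ) '' s) (proj Fu (Jm σ) u) := by
  obtain ⟨-, -, h | h⟩ := h
  · exact h.2 σ
  · exact absurd (h.1 ▸ hs') hout

theorem isSafetyController_projController (hne : ∀ i, ∀ t ∈ P i, t.Nonempty)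
    (hout : Xsetᶜ ∉ cells P) (hdisj : Pairwise (Disjoint on Im))
    {C' : Set ((i : ι) → E i) → Set ((j : κ) → Fu j)}
    (hC' : IsSafetyController (deltaC E Fu Fbar Xset Uset P V Im Ic Jm) (cells P) C') (σ : τ) :
    IsSafetyController (deltaSub E Fu Fbar Xset Uset P V (Im σ) (Ic σ) (Jm σ))
      (cellsOn P (Im σ)) (projController P C' (Im σ) (Jm σ)) := by
  refine ⟨?_, fun sσ ⟨_, hsσ, _⟩ => hsσ, ?_⟩
  · rintro _ _ ⟨-, s, -, rfl, u, hu, rfl⟩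
    obtain ⟨s₀, hs₀⟩ := hC'.1 s u hu
    exact ⟨_, proj_image_mem_deltaSub_of_mem_deltaC hout hs₀
      (hC'.mem_safe_of_mem_delta hu hs₀) σ⟩
  · rintro _ _ ⟨-, s, hs, rfl, u, hu, rfl⟩ t ht
    obtain ⟨s₀, hs₀⟩ := hC'.1 s u hu
    have hs₀P := hC'.mem_safe_of_mem_delta hu hs₀
    have huV : u ∈ pi univ V := hs₀.2.1
    obtain ⟨hsσ, huσ, ⟨htP, hmeet⟩ | ⟨rfl, hexit⟩⟩ := ht
    · obtain ⟨s', hs'P, rfl, hother⟩ := exists_mem_cells_proj_image_eq hne hs₀P htP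
      have hs' : s' ∈ deltaC E Fu Fbar Xset Uset P V Im Ic Jm s u := by
        refine ⟨hs, huV, Or.inl ⟨hs'P, fun σ' => ?_⟩⟩
        rcases eq_or_ne σ' σ with rfl | hσ'
        · exact ⟨hsσ, huσ, Or.inl ⟨htP, hmeet⟩⟩
        · rw [hother _ (hdisj hσ')]
          exact proj_image_mem_deltaSub_of_mem_deltaC hout hs₀ hs₀P σ'
      obtain ⟨u', hu'⟩ := hC'.2.2 s u hu s' hs'
      exact ⟨_, htP, s', hs'P, rfl, u', hu', rfl⟩
    · have hexitC : Xsetᶜ ∈ deltaC E Fu Fbar Xset Uset P V Im Ic Jm s u :=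
        ⟨hs, huV, Or.inr ⟨rfl, σ, hsσ, huσ, Or.inr ⟨rfl, hexit⟩⟩⟩
      exact absurd (hC'.mem_safe_of_mem_delta hu hexitC) hout

end Abstraction

theorem stmt15_general
    {ι κ τ : Type*}
    (nd : ι → ℕ) (pd : κ → ℕ)
    (𝒳i : (i : ι) → Set (Vec (nd i))) (𝒰j : (j : κ) → Set (Vec (pd j)))
    (Fbar : Set ((i : ι) → Vec (nd i)) → Set ((j : κ) → Vec (pd j)) →
      Set ((i : ι) → Vec (nd i)))
    (P : (i : ι) → Set (Set (Vec (nd i)))) (V : (j : κ) → Set (Vec (pd j)))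
    (Im Ic : τ → Set ι) (Jm : τ → Set κ)
    (hP : ∀ i, IsFinPartition (P i) (𝒳i i))
    (hIc : IsIndexPartition Ic)
    (hnov : ∀ σ, Ic σ = Im σ)
    (C' : Set ((i : ι) → Vec (nd i)) → Set ((j : κ) → Vec (pd j)))
    (hC' : IsSafetyController (deltaC (fun i => Vec (nd i)) (fun j => Vec (pd j)) Fbar (Set.pi Set.univ 𝒳i) (Set.pi Set.univ 𝒰j) P V Im Ic Jm) (cells P) C')
    (Cs : (σ : τ) → Set ((i : Im σ) → Vec (nd i.1)) → Set ((j : Jm σ) → Vec (pd j.1)))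
    (hCs : ∀ σ, ∀ sσ ∈ cellsOn P (Im σ), Cs σ sσ =
      {uσ | ∃ s ∈ cells P, proj (fun i => Vec (nd i)) (Im σ) '' s = sσ ∧
        ∃ u ∈ C' s, proj (fun j => Vec (pd j)) (Jm σ) u = uσ})
    (hCsOut : ∀ σ, ∀ sσ ∉ cellsOn P (Im σ), Cs σ sσ = ∅) :
    ∀ σ, IsSafetyController (deltaSub (fun i => Vec (nd i)) (fun j => Vec (pd j)) Fbar (Set.pi Set.univ 𝒳i) (Set.pi Set.univ 𝒰j) P V (Im σ) (Ic σ) (Jm σ))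
      (cellsOn P (Im σ)) (Cs σ) := by
  intro σ
  obtain rfl : Im = Ic := (funext hnov).symm
  have hCs_eq : Cs σ = projController P C' (Im σ) (Jm σ) := by
    funext sσ
    by_cases hsσ : sσ ∈ cellsOn P (Im σ)
    · rw [hCs σ sσ hsσ]
      ext
      simp only [projController, mem_ofPred_eq, hsσ, true_and]
    · rw [hCsOut σ sσ hsσ]
      ext
      simp only [projController, mem_ofPred_eq, hsσ, false_and, mem_empty_iff_false]
  rw [hCs_eq]
  exact isSafetyController_projController (fun i _ ht => (hP i).nonempty_of_mem ht)
    (compl_univ_pi_notMem_cells hP) hIc.2 hC' σ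

theorem stmt15
    {ι κ τ : Type*} [Finite ι] [Finite κ] [Finite τ]
    (nd : ι → ℕ) (pd : κ → ℕ)
    (𝒳i : (i : ι) → Set (Vec (nd i))) (𝒰j : (j : κ) → Set (Vec (pd j)))
    (F : ((i : ι) → Vec (nd i)) → ((j : κ) → Vec (pd j)) → Set ((i : ι) → Vec (nd i)))
    (Fbar : Set ((i : ι) → Vec (nd i)) → Set ((j : κ) → Vec (pd j)) →
      Set ((i : ι) → Vec (nd i)))
    (P : (i : ι) → Set (Set (Vec (nd i)))) (V : (j : κ) → Set (Vec (pd j)))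
    (Im Ic : τ → Set ι) (Jm : τ → Set κ)
    (hF : ∀ x u, u ∈ Set.pi Set.univ 𝒰j → (F x u).Nonempty)
    (hFbar : ∀ A B, Fset F A B ⊆ Fbar A B)
    (hP : ∀ i, IsFinPartition (P i) (𝒳i i))
    (hV : ∀ j, (V j).Finite ∧ V j ⊆ 𝒰j j)
    (hIc : IsIndexPartition Ic) (hIcne : ∀ σ, (Ic σ).Nonempty) (hIcIm : ∀ σ, Ic σ ⊆ Im σ)
    (hJ : IsIndexPartition Jm) (hJne : ∀ σ, (Jm σ).Nonempty)
    (hnov : ∀ σ, Ic σ = Im σ)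
    (C' : Set ((i : ι) → Vec (nd i)) → Set ((j : κ) → Vec (pd j)))
    (hC' : IsSafetyController (deltaC (fun i => Vec (nd i)) (fun j => Vec (pd j)) Fbar (Set.pi Set.univ 𝒳i) (Set.pi Set.univ 𝒰j) P V Im Ic Jm) (cells P) C')
    (Cs : (σ : τ) → Set ((i : Im σ) → Vec (nd i.1)) → Set ((j : Jm σ) → Vec (pd j.1)))
    (hCs : ∀ σ, ∀ sσ ∈ cellsOn P (Im σ), Cs σ sσ =
      {uσ | ∃ s ∈ cells P, proj (fun i => Vec (nd i)) (Im σ) '' s = sσ ∧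
        ∃ u ∈ C' s, proj (fun j => Vec (pd j)) (Jm σ) u = uσ})
    (hCsOut : ∀ σ, ∀ sσ ∉ cellsOn P (Im σ), Cs σ sσ = ∅) :
    ∀ σ, IsSafetyController (deltaSub (fun i => Vec (nd i)) (fun j => Vec (pd j)) Fbar (Set.pi Set.univ 𝒳i) (Set.pi Set.univ 𝒰j) P V (Im σ) (Ic σ) (Jm σ))
      (cellsOn P (Im σ)) (Cs σ) :=
  stmt15_general nd pd 𝒳i 𝒰j Fbar P V Im Ic Jm hP hIc hnov C' hC' Cs hCs hCsOut
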